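/- There exists a constant K such that for every natural number k ≥ K and every b dividing k with 2 ≤ b ≤ k/2, one has ln(k!) − ln(b!) − b·ln((k/b)!) ≥ (k·ln b)/3; equivalently, the index k! / ( b! · ((k/b)!)^b ) is at least b^(k/3). -/

import Mathlib

/-!
Write `k = b * a`. Stirling's bounds `n log n - n ≤ log n! ≤ n log n - n + (log n) / 2 + 1`
give `log k! - log b! - b log a! ≥ a b log b - (b log a / 2 + b log b + log b / 2 + 1)`:
the main terms `a b log (a b)` and `b · a log a` cancel up to `a b log b`. The error term is at
most `2/3 · a b log b` once either the blocks are large (`a ≥ 8`) or, as `a b ≥ 7 · 512`,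
there are many of them (`b ≥ 512`). The bound on the index follows by exponentiating.
-/

open Real
open scoped Nat

lemma log_factorial_le {n : ℕ} (hn : n ≠ 0) :
    log n ! ≤ n * log n - n + log n / 2 + 1 := by
  obtain ⟨m, rfl⟩ := Nat.exists_eq_succ_of_ne_zero hn
  have hmono : log (Stirling.stirlingSeq (m + 1)) ≤ log (Stirling.stirlingSeq 1) :=
    Stirling.log_stirlingSeq'_antitone (Nat.zero_le m)
  have hn0 : (0 : ℝ) < (m + 1 : ℕ) := by positivity
  rw [Stirling.log_stirlingSeq_formula, Stirling.stirlingSeq_one,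
    log_div (exp_pos 1).ne' (by positivity), log_exp, log_sqrt zero_le_two,
    log_mul two_ne_zero hn0.ne', log_div hn0.ne' (exp_pos 1).ne', log_exp] at hmono
  linarith

lemma le_log_factorial {n : ℕ} (hn : n ≠ 0) : n * log n - n ≤ log n ! := by
  have hlog : 0 ≤ log n := log_natCast_nonneg n
  have hπ : 0 < log (2 * π) := log_pos (by linarith [pi_gt_three])
  linarith [Stirling.le_log_factorial_stirling hn]

lemma log_factorial_div_eq (k a b : ℕ) :
    log ((k ! : ℝ) / (b ! * (a ! : ℝ) ^ b)) = log k ! - log b ! - b * log a ! := by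
  have := k.factorial_pos; have := a.factorial_pos; have := b.factorial_pos
  rw [log_div (by positivity) (by positivity), log_mul (by positivity) (by positivity), log_pow]
  ring

lemma le_log_factorial_mul_sub {a b : ℕ} (ha : a ≠ 0) (hb : b ≠ 0) :
    (b : ℝ) * a * log b - (b * log a / 2 + b * log b + log b / 2 + 1)
      ≤ log (b * a) ! - log b ! - b * log a ! := by
  have hk := le_log_factorial (Nat.mul_ne_zero hb ha)
  have hb' := log_factorial_le hb
  have ha' := mul_le_mul_of_nonneg_left (log_factorial_le ha) (Nat.cast_nonneg b)
  push_cast at hk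
  rw [log_mul (by positivity) (by positivity)] at hk
  linarith

section

variable {A B : ℝ}

lemma log_index_error_le_of_eight_le (hA : 8 ≤ A) (hB : 2 ≤ B) :
    B * log A / 2 + B * log B + log B / 2 + 1 ≤ 2 / 3 * (B * A) * log B := by
  have hlog2 := log_two_gt_d9
  have hlogB : log 2 ≤ log B := log_le_log two_pos hB
  have hlogA : log A ≤ A / 2 - 1 + log 2 := by
    have := log_le_sub_one_of_pos (show 0 < A / 2 by linarith)
    rw [log_div (by linarith) two_ne_zero] at this
    linarith
  have hBlogB : 0 ≤ B * log B := mul_nonneg (by linarith) (by linarith)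
  nlinarith [mul_le_mul_of_nonneg_left hlogA (by linarith : (0 : ℝ) ≤ B),
    mul_nonneg (by linarith : (0 : ℝ) ≤ A - 8) hBlogB,
    mul_nonneg (by linarith : (0 : ℝ) ≤ B - 2) (by linarith : (0 : ℝ) ≤ log B)]

lemma log_index_error_le_of_le_eight (hA : 2 ≤ A) (hA' : A ≤ 8) (hB : 512 ≤ B) :
    B * log A / 2 + B * log B + log B / 2 + 1 ≤ 2 / 3 * (B * A) * log B := by
  have hlog2 := log_two_gt_d9
  have hlogA : log A ≤ 3 * log 2 := by
    have := log_le_log (by linarith) hA'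
    rwa [show (8 : ℝ) = 2 ^ 3 by norm_num, log_pow, Nat.cast_ofNat] at this
  have hlogB : 9 * log 2 ≤ log B := by
    have := log_le_log (by norm_num) hB
    rwa [show (512 : ℝ) = 2 ^ 9 by norm_num, log_pow, Nat.cast_ofNat] at this
  have hlogB' : log B ≤ B - 1 := log_le_sub_one_of_pos (by linarith)
  have hBlogB : 0 ≤ B * log B := mul_nonneg (by linarith) (by linarith)
  nlinarith [mul_le_mul_of_nonneg_left hlogA (by linarith : (0 : ℝ) ≤ B),
    mul_le_mul_of_nonneg_left hlogB (by linarith : (0 : ℝ) ≤ B),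
    mul_nonneg (by linarith : (0 : ℝ) ≤ A - 2) hBlogB]

end

/-- There exists a constant `K` such that for every `k ≥ K` and every `b ∣ k` with
`2 ≤ b ≤ k/2`, one has `ln(k!) − ln(b!) − b·ln((k/b)!) ≥ (k·ln b)/3`; equivalently,
the index `k! / (b! · ((k/b)!)^b)` is at least `b^(k/3)`. -/
theorem index_of_maximal_imprimitive_subgroup :
    ∃ K : ℕ, ∀ (k : ℕ), K ≤ k → ∀ b : ℕ, b ∣ k → 2 ≤ b → 2 * b ≤ k →
      (Real.log (Nat.factorial k) - Real.log (Nat.factorial b)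
          - (b : ℝ) * Real.log (Nat.factorial (k / b)) ≥ (k : ℝ) * Real.log b / 3) ∧
      ((Nat.factorial k : ℝ) /
          ((Nat.factorial b : ℝ) * (Nat.factorial (k / b) : ℝ) ^ b) ≥
        (b : ℝ) ^ ((k : ℝ) / 3)) := by
  refine ⟨7 * 512, fun k hk b ⟨a, hab⟩ hb h2b => ?_⟩
  subst hab
  have ha : 2 ≤ a := by nlinarith
  rw [Nat.mul_div_cancel_left a (by omega)]
  have herror : (b : ℝ) * log a / 2 + b * log b + log b / 2 + 1 ≤ 2 / 3 * (b * a) * log b := by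
    rcases le_or_gt 8 a with ha8 | ha8
    · exact log_index_error_le_of_eight_le (by exact_mod_cast ha8) (by exact_mod_cast hb)
    · have : 512 ≤ b := by nlinarith
      exact log_index_error_le_of_le_eight (by exact_mod_cast ha) (by exact_mod_cast ha8.le)
        (by exact_mod_cast this)
  have hlog : log (b * a)! - log b ! - b * log a ! ≥ ((b * a : ℕ) : ℝ) * log b / 3 := by
    have := le_log_factorial_mul_sub (a := a) (b := b) (by omega) (by omega)
    push_cast
    linarith
  refine ⟨hlog, ?_⟩
  rw [ge_iff_le, rpow_le_iff_le_log (by positivity) (by positivity), log_factorial_div_eq]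
  linarith
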